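/- For all integers n ≥ 1 and m with n ≤ m ≤ 2^n − 1 there exists a family F of n sets such that N(F) = V(F), |V(F)| = m, F has exactly one IE-vector, and this IE-vector is given by x_σ = (−1)^{|σ|+1} for all σ ∈ N(F); in particular all of its m entries are nonzero. -/

import Mathlib

/-!
The vector `x_σ = (-1)^(|σ|+1)` is an IE-vector of every family, by inclusion–exclusion:
the nerve is closed under nonempty subsets and contains the Venn diagram, so each defining sum
runs over all nonempty subsets of `τ`. When the nerve equals the Venn diagram the defining
equations are unitriangular, hence this IE-vector is the only one. It remains to realise a
nerve equal to its Venn diagram with exactly `m` faces: any abstract simplicial complex `D`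
is both the nerve and the Venn diagram of the family `F_i = {τ ∈ D | i ∈ τ}`, and
complexes with any number `m ≤ 2^n - 1` of faces are obtained by adding minimal missing faces
one at a time. -/

open Finset
open scoped Classical

variable {ι S : Type*}

def region (F : ι → Set S) (τ : Finset ι) : Set S :=
  (⋂ i ∈ τ, F i) \ ⋃ i ∉ τ, F i

def venn (F : ι → Set S) : Set (Finset ι) :=
  {τ | τ.Nonempty ∧ (region F τ).Nonempty}

def nerve (F : ι → Set S) : Set (Finset ι) :=
  {σ | σ.Nonempty ∧ (⋂ i ∈ σ, F i).Nonempty}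

def IsIEVector (F : ι → Set S) (x : Finset ι → ℝ) : Prop :=
  (∀ σ, σ ∉ nerve F → x σ = 0) ∧
  ∀ τ ∈ venn F, (∑ σ ∈ τ.powerset.filter (· ∈ nerve F), x σ) = 1

section IEVector

variable (F : ι → Set S)

theorem mem_nerve_of_subset {σ τ : Finset ι} (hσ : σ.Nonempty) (hστ : σ ⊆ τ)
    (hτ : τ ∈ nerve F) : σ ∈ nerve F := by
  obtain ⟨_, p, hp⟩ := hτ
  simp only [Set.mem_iInter] at hp
  exact ⟨hσ, p, Set.mem_iInter₂.2 fun i hi => hp i (hστ hi)⟩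

theorem venn_subset_nerve : venn F ⊆ nerve F :=
  fun _ ⟨hτ, p, hp, _⟩ => ⟨hτ, p, hp⟩

noncomputable def inclusionExclusionVector (σ : Finset ι) : ℝ :=
  if σ ∈ nerve F then (-1) ^ (σ.card + 1) else 0

theorem sum_powerset_filter_nonempty_neg_one_pow {τ : Finset ι} (hτ : τ.Nonempty) :
    ∑ σ ∈ τ.powerset.filter (·.Nonempty), (-1 : ℝ) ^ (σ.card + 1) = 1 := by
  have hzero : ∑ σ ∈ τ.powerset, (-1 : ℝ) ^ σ.card = 0 := by
    exact_mod_cast sum_powerset_neg_one_pow_card_of_nonempty hτ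
  have hfilter : τ.powerset.filter (·.Nonempty) = τ.powerset.erase ∅ := by
    simp only [nonempty_iff_ne_empty, filter_ne']
  simp only [hfilter, pow_succ, mul_neg_one, sum_neg_distrib,
    sum_erase_eq_sub (empty_mem_powerset τ), hzero, card_empty, pow_zero]
  norm_num

theorem isIEVector_inclusionExclusionVector :
    IsIEVector F (inclusionExclusionVector F) := by
  refine ⟨fun σ hσ => if_neg hσ, fun τ hτ => ?_⟩
  have hτN := venn_subset_nerve F hτ
  have hfilter : τ.powerset.filter (· ∈ nerve F) = τ.powerset.filter (·.Nonempty) :=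
    filter_congr fun σ hσ =>
      ⟨fun h => h.1, fun h => mem_nerve_of_subset F h (mem_powerset.1 hσ) hτN⟩
  rw [hfilter, ← sum_powerset_filter_nonempty_neg_one_pow hτ.1]
  refine sum_congr rfl fun σ hσ => if_pos ?_
  rw [mem_filter, mem_powerset] at hσ
  exact mem_nerve_of_subset F hσ.2 hσ.1 hτN

theorem IsIEVector.eq_of_nerve_subset_venn {F : ι → Set S} (hNV : nerve F ⊆ venn F)
    {x y : Finset ι → ℝ} (hx : IsIEVector F x) (hy : IsIEVector F y) : x = y := by
  funext σ
  induction σ using Finset.strongInduction with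
  | _ σ ih =>
    by_cases hσ : σ ∈ nerve F
    · have hmem : σ ∈ σ.powerset.filter (· ∈ nerve F) := mem_filter.2 ⟨mem_powerset_self σ, hσ⟩
      have hx₁ := hx.2 σ (hNV hσ)
      have hy₁ := hy.2 σ (hNV hσ)
      rw [← add_sum_erase _ _ hmem] at hx₁ hy₁
      have hlower : ∑ ρ ∈ (σ.powerset.filter (· ∈ nerve F)).erase σ, x ρ =
          ∑ ρ ∈ (σ.powerset.filter (· ∈ nerve F)).erase σ, y ρ := by
        refine sum_congr rfl fun ρ hρ => ih ρ ?_
        obtain ⟨hne, hρ⟩ := mem_erase.1 hρ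
        exact Finset.ssubset_iff_subset_ne.2 ⟨mem_powerset.1 (mem_filter.1 hρ).1, hne⟩
      linarith
    · rw [hx.1 σ hσ, hy.1 σ hσ]

theorem isIEVector_iff_eq_inclusionExclusionVector (hNV : nerve F ⊆ venn F)
    (x : Finset ι → ℝ) : IsIEVector F x ↔ x = inclusionExclusionVector F :=
  ⟨fun hx => hx.eq_of_nerve_subset_venn hNV (isIEVector_inclusionExclusionVector F),
    fun h => h ▸ isIEVector_inclusionExclusionVector F⟩

theorem setOf_inclusionExclusionVector_ne_zero :
    {σ | inclusionExclusionVector F σ ≠ 0} = nerve F := by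
  ext σ
  by_cases hσ : σ ∈ nerve F <;> simp [inclusionExclusionVector, hσ]

end IEVector

section Complex

def IsAbstractSimplicialComplex (D : Set (Finset ι)) : Prop :=
  (∀ τ ∈ D, τ.Nonempty) ∧ ∀ τ ∈ D, ∀ σ : Finset ι, σ.Nonempty → σ ⊆ τ → σ ∈ D

def memberFamily (D : Set (Finset ι)) (i : ι) : Set (Finset ι) :=
  {τ | τ ∈ D ∧ i ∈ τ}

variable {D : Set (Finset ι)}

theorem mem_biInter_memberFamily {σ τ : Finset ι} :
    τ ∈ ⋂ i ∈ σ, memberFamily D i ↔ σ.Nonempty → τ ∈ D ∧ σ ⊆ τ := by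
  simp only [Set.mem_iInter, memberFamily, Set.mem_ofPred_eq]
  exact ⟨fun h ⟨i, hi⟩ => ⟨(h i hi).1, fun j hj => (h j hj).2⟩,
    fun h i hi => ⟨(h ⟨i, hi⟩).1, (h ⟨i, hi⟩).2 hi⟩⟩

theorem region_memberFamily {τ : Finset ι} (hτ : τ.Nonempty) :
    region (memberFamily D) τ = D ∩ {τ} := by
  ext ρ
  rw [region, Set.mem_sdiff, mem_biInter_memberFamily]
  simp only [Set.mem_iUnion, memberFamily, Set.mem_ofPred_eq, Set.mem_inter_iff,
    Set.mem_singleton_iff, not_exists, not_and]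
  constructor
  · rintro ⟨hin, hout⟩
    obtain ⟨hρ, hτρ⟩ := hin hτ
    exact ⟨hρ, Subset.antisymm (fun i hi => by_contra fun hiτ => hout i hiτ hρ hi) hτρ⟩
  · rintro ⟨hρ, rfl⟩
    exact ⟨fun _ => ⟨hρ, Subset.rfl⟩, fun i hi _ hiρ => hi hiρ⟩

theorem venn_memberFamily (hD : ∀ τ ∈ D, τ.Nonempty) : venn (memberFamily D) = D := by
  ext τ
  refine ⟨fun ⟨hτ, hreg⟩ => ?_, fun h => ⟨hD τ h, ?_⟩⟩
  · rw [region_memberFamily hτ] at hreg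
    obtain ⟨ρ, hρ, rfl⟩ := hreg
    exact hρ
  · rw [region_memberFamily (hD τ h)]
    exact ⟨τ, h, rfl⟩

theorem nerve_memberFamily (hD : IsAbstractSimplicialComplex D) :
    nerve (memberFamily D) = D := by
  ext σ
  refine ⟨fun ⟨hσ, ρ, hρ⟩ => ?_, fun h => ⟨hD.1 σ h, σ, ?_⟩⟩
  · obtain ⟨hρD, hσρ⟩ := mem_biInter_memberFamily.1 hρ hσ
    exact hD.2 ρ hρD σ hσ hσρ
  · exact mem_biInter_memberFamily.2 fun _ => ⟨h, Subset.rfl⟩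

theorem IsAbstractSimplicialComplex.insert_of_minimal {D : Finset (Finset ι)}
    (hD : IsAbstractSimplicialComplex (D : Set (Finset ι))) {σ : Finset ι}
    (hσ : Minimal (fun ρ => ρ.Nonempty ∧ ρ ∉ D) σ) :
    IsAbstractSimplicialComplex ((insert σ D : Finset (Finset ι)) : Set (Finset ι)) := by
  refine ⟨fun τ hτ => ?_, fun τ hτ ρ hρ hρτ => ?_⟩
  · rcases mem_insert.1 hτ with rfl | hτ
    exacts [hσ.1.1, hD.1 τ hτ]
  · rcases mem_insert.1 hτ with rfl | hτ
    · by_cases hρD : ρ ∈ D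
      · exact mem_insert_of_mem hρD
      · rw [Subset.antisymm hρτ (hσ.2 ⟨hρ, hρD⟩ hρτ)]
        exact mem_insert_self _ _
    · exact mem_insert_of_mem (hD.2 τ hτ ρ hρ hρτ)

theorem exists_isAbstractSimplicialComplex_card [Fintype ι] {m : ℕ}
    (hm : m ≤ 2 ^ Fintype.card ι - 1) :
    ∃ D : Finset (Finset ι), IsAbstractSimplicialComplex (D : Set (Finset ι)) ∧ D.card = m := by
  induction m with
  | zero => exact ⟨∅, ⟨fun _ h => absurd h (by simp), fun _ h => absurd h (by simp)⟩, rfl⟩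
  | succ m ih =>
    obtain ⟨D, hD, hcard⟩ := ih (by omega)
    have hlt : D.card < (univ.erase (∅ : Finset ι)).card := by
      rw [card_erase_of_mem (mem_univ _), card_univ, Fintype.card_finset]
      omega
    obtain ⟨ρ, hρ, hρD⟩ := exists_mem_notMem_of_card_lt_card hlt
    have hmissing : (univ.filter fun ρ : Finset ι => ρ.Nonempty ∧ ρ ∉ D).Nonempty :=
      ⟨ρ, mem_filter.2 ⟨mem_univ _, nonempty_iff_ne_empty.2 (ne_of_mem_erase hρ), hρD⟩⟩
    obtain ⟨σ, hσ⟩ := exists_minimal hmissing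
    have hσ' : Minimal (fun ρ => ρ.Nonempty ∧ ρ ∉ D) σ := by
      simpa only [mem_filter, mem_univ, true_and] using hσ
    exact ⟨insert σ D, hD.insert_of_minimal hσ', by rw [card_insert_of_notMem hσ'.1.2, hcard]⟩

end Complex

theorem stmt15_general (n m : ℕ) (hm : m ≤ 2 ^ n - 1) :
    ∃ (S : Type) (F : Fin n → Set S),
      nerve F = venn F ∧ (venn F).ncard = m ∧
      (∀ x : Finset (Fin n) → ℝ, IsIEVector F x ↔
        x = fun σ => if σ ∈ nerve F then (-1 : ℝ) ^ (σ.card + 1) else 0) ∧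
      (∀ x : Finset (Fin n) → ℝ, IsIEVector F x → {σ | x σ ≠ 0}.ncard = m) := by
  obtain ⟨D, hD, hcard⟩ :=
    exists_isAbstractSimplicialComplex_card (ι := Fin n) (m := m) (by rwa [Fintype.card_fin])
  set F := memberFamily (D : Set (Finset (Fin n)))
  have hN : nerve F = D := nerve_memberFamily hD
  have hV : venn F = D := venn_memberFamily hD.1
  have hNV : nerve F ⊆ venn F := by rw [hN, hV]
  refine ⟨Finset (Fin n), F, hN.trans hV.symm, by rw [hV, Set.ncard_coe_finset, hcard],
    isIEVector_iff_eq_inclusionExclusionVector F hNV, fun x hx => ?_⟩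
  rw [(isIEVector_iff_eq_inclusionExclusionVector F hNV x).1 hx,
    setOf_inclusionExclusionVector_ne_zero, hN, Set.ncard_coe_finset, hcard]

/-- for all `n ≥ 1` and `n ≤ m ≤ 2^n − 1` there is a family of `n` sets with
`N(F) = V(F)`, `|V(F)| = m`, and a unique IE-vector, namely `x_σ = (−1)^{|σ|+1}` on the
nerve (and `0` off it); in particular all of its `m` entries are nonzero. -/
theorem stmt15 (n m : ℕ) (hn : 1 ≤ n) (hnm : n ≤ m) (hm : m ≤ 2 ^ n - 1) :
    ∃ (S : Type) (F : Fin n → Set S),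
      nerve F = venn F ∧ (venn F).ncard = m ∧
      (∀ x : Finset (Fin n) → ℝ, IsIEVector F x ↔
        x = fun σ => if σ ∈ nerve F then (-1 : ℝ) ^ (σ.card + 1) else 0) ∧
      (∀ x : Finset (Fin n) → ℝ, IsIEVector F x → {σ | x σ ≠ 0}.ncard = m) :=
  stmt15_general n m hm
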